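/- arXiv:2409.18629 — 2 statements merged into one kernel-verified Lean document; each statement's English description precedes it below -/
import Mathlib

section
/- Let q > 1, Δt > 0, a mesh size h > 0, an integer M_x ≥ 1, nonnegative symmetric summable weights (w_j)_{j≠0}, and initial data u⁰ : ℤ → ℝ with u⁰_i = 0 for |i| > M_x. Then the fully discrete implicit scheme (FD) admits exactly one solution: there exists a unique sequence of functions (uⁿ)_{n∈ℕ}, uⁿ : ℤ → ℝ, with u⁰ as given, uⁿ_i = 0 for |i| > M_x and all n, and ((u^{n+1}_i)^{q−1} − (uⁿ_i)^{q−1})/Δt + [(−Δ)_h u^{n+1}]_i = 0 for all |i| ≤ M_x and all n ≥ 0. -/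
open scoped BigOperators ENNReal

noncomputable def opow (x r : ℝ) : ℝ := |x| ^ (r - 1) * x

noncomputable def discLap (w u : ℤ → ℝ) (i : ℤ) : ℝ :=
  ∑' j : ℤ, if j = 0 then 0 else w j * (u i - u (i - j))

noncomputable def lqNorm (h q : ℝ) (u : ℤ → ℝ) : ℝ :=
  (∑' i : ℤ, h * |u i| ^ q) ^ (1 / q)

noncomputable def energyNorm (h : ℝ) (w u : ℤ → ℝ) : ℝ :=
  Real.sqrt ((1 / 2) * ∑' i : ℤ, ∑' j : ℤ, if j = 0 then 0 else h * w j * (u i - u (i - j)) ^ 2)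

/-- The fully discrete implicit scheme (FD). -/
def IsFD (q Δt : ℝ) (w : ℤ → ℝ) (Mx : ℤ) (u0 : ℤ → ℝ) (u : ℕ → ℤ → ℝ) : Prop :=
  u 0 = u0 ∧
  (∀ n : ℕ, ∀ i : ℤ, Mx < |i| → u n i = 0) ∧
  (∀ n : ℕ, ∀ i : ℤ, |i| ≤ Mx →
    (opow (u (n + 1) i) (q - 1) - opow (u n i) (q - 1)) / Δt + discLap w (u (n + 1)) i = 0)

/-- A solution of the semi-discrete scheme (SD) with initial data `u0`. -/
def IsSD (q : ℝ) (w : ℤ → ℝ) (Mx : ℤ) (u0 : ℤ → ℝ) (v : ℤ → ℝ → ℝ) : Prop :=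
  (∀ i : ℤ, ContinuousOn (v i) (Set.Ici 0)) ∧
  (∀ i : ℤ, Mx < |i| → ∀ t : ℝ, 0 ≤ t → v i t = 0) ∧
  (∀ i : ℤ, v i 0 = u0 i) ∧
  (∀ i : ℤ, |i| ≤ Mx → ∀ t : ℝ, 0 ≤ t →
    opow (v i t) (q - 1) = opow (u0 i) (q - 1) - ∫ s in (0:ℝ)..t, discLap w (fun k => v k s) i)

/-- `C` satisfies the discrete Poincaré–Sobolev inequality for exponent `q`. -/
def PSConst (h q C : ℝ) (w : ℤ → ℝ) (Mx : ℤ) : Prop :=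
  ∀ f : ℤ → ℝ, (∀ i : ℤ, Mx < |i| → f i = 0) → lqNorm h q f ≤ C * energyNorm h w f

/-!
Each time step asks for `v`, vanishing outside `[-Mx, Mx]`, with
`opow (v i) (q - 1) + Δt (-Δ_h v)_i = opow (u i) (q - 1)` on `[-Mx, Mx]`. On functions supported
in a finite set, `-Δ_h` acts as the matrix `S • 1 - (w (i - k))` with `S = ∑ w_j`; it is symmetric
with row sums of the off-diagonal part at most `S`, hence positive semidefinite. The step is then
the critical-point equation of the coercive potential `∑ |x i| ^ q / q + Δt ⟪x, A x⟫ / 2 - ⟪b, x⟫`,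
so a global minimiser solves it; uniqueness follows by pairing the difference of two solutions with
itself, since `x ↦ opow x (q - 1)` is strictly increasing and `A` is positive semidefinite. A
unique successor at every step gives a unique sequence.
-/

open Matrix Filter

lemma opow_neg (x r : ℝ) : opow (-x) r = -opow x r := by
  simp [opow]

lemma opow_of_nonneg {x r : ℝ} (hx : 0 ≤ x) (hr : 0 < r) : opow x r = x ^ r := by
  rw [opow, abs_of_nonneg hx, ← Real.rpow_add_one' hx (by linarith), sub_add_cancel]

lemma strictMono_opow {r : ℝ} (hr : 0 < r) : StrictMono (opow · r) :=
  strictMono_of_odd_strictMonoOn_nonneg (fun x => opow_neg x r) fun x hx y hy hxy => by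
    simp only [opow_of_nonneg hx hr, opow_of_nonneg (Set.mem_Ici.mp hy) hr]
    exact Real.strictMonoOn_rpow_Ici_of_exponent_pos hr hx hy hxy

lemma opow_sub_opow_mul_sub_nonneg {r : ℝ} (hr : 0 < r) (x y : ℝ) :
    0 ≤ (opow x r - opow y r) * (x - y) := by
  rcases lt_trichotomy x y with hxy | rfl | hxy
  · nlinarith [strictMono_opow hr hxy]
  · simp
  · nlinarith [strictMono_opow hr hxy]

lemma eq_of_opow_sub_opow_mul_sub_eq_zero {r : ℝ} (hr : 0 < r) {x y : ℝ}
    (h : (opow x r - opow y r) * (x - y) = 0) : x = y := by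
  rcases mul_eq_zero.mp h with h | h
  · exact (strictMono_opow hr).injective (sub_eq_zero.mp h)
  · exact sub_eq_zero.mp h

lemma hasDerivAt_abs_rpow_div {p : ℝ} (hp : 0 < p) (x : ℝ) :
    HasDerivAt (fun s => |s| ^ (p + 1) / (p + 1)) (opow x p) x := by
  refine ((hasDerivAt_abs_rpow x (by linarith : 1 < p + 1)).div_const (p + 1)).congr_deriv ?_
  rw [opow, show p + 1 - 2 = p - 1 by ring]
  field_simp

section MonotoneSystem

variable {ι : Type*} [Fintype ι]

lemma norm_rpow_le_sum_abs_rpow {r : ℝ} (hr : 0 < r) (x : ι → ℝ) :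
    ‖x‖ ^ r ≤ ∑ i, |x i| ^ r := by
  have hS : 0 ≤ ∑ i, |x i| ^ r := Finset.sum_nonneg fun i _ => by positivity
  have hx : ‖x‖ ≤ (∑ i, |x i| ^ r) ^ r⁻¹ := by
    refine (pi_norm_le_iff_of_nonneg (by positivity)).2 fun i => ?_
    rw [Real.norm_eq_abs, Real.le_rpow_inv_iff_of_pos (abs_nonneg _) hS hr]
    exact Finset.single_le_sum (f := fun i => |x i| ^ r) (fun i _ => by positivity)
      (Finset.mem_univ i)
  calc ‖x‖ ^ r ≤ ((∑ i, |x i| ^ r) ^ r⁻¹) ^ r := Real.rpow_le_rpow (norm_nonneg x) hx hr.le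
    _ = ∑ i, |x i| ^ r := Real.rpow_inv_rpow hS hr.ne'

lemma tendsto_rpow_add_one_div_sub_mul_atTop {p : ℝ} (hp : 0 < p) (B : ℝ) :
    Tendsto (fun s : ℝ => s ^ (p + 1) / (p + 1) - B * s) atTop atTop := by
  have h : Tendsto (fun s : ℝ => s * (s ^ p / (p + 1) - B)) atTop atTop :=
    tendsto_id.atTop_mul_atTop₀
      (tendsto_atTop_add_const_right _ _ ((tendsto_rpow_atTop hp).atTop_div_const (by linarith)))
  refine h.congr' ((eventually_ge_atTop 0).mono fun s hs => ?_)
  beta_reduce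
  rw [Real.rpow_add_one' hs (by linarith)]
  ring

noncomputable def opowPotential (p : ℝ) (A : Matrix ι ι ℝ) (b x : ι → ℝ) : ℝ :=
  ∑ i, |x i| ^ (p + 1) / (p + 1) + x ⬝ᵥ (A *ᵥ x) / 2 - b ⬝ᵥ x

variable {p : ℝ} {A : Matrix ι ι ℝ}

lemma continuous_opowPotential (hp : 0 < p) (b : ι → ℝ) : Continuous (opowPotential p A b) := by
  unfold opowPotential dotProduct mulVec
  fun_prop (disch := linarith)

lemma sub_mul_le_opowPotential (hp : 0 < p) (hA : A.PosSemidef) (b x : ι → ℝ) :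
    ‖x‖ ^ (p + 1) / (p + 1) - (∑ i, |b i|) * ‖x‖ ≤ opowPotential p A b x := by
  have hquad : 0 ≤ x ⬝ᵥ (A *ᵥ x) := by simpa using hA.dotProduct_mulVec_nonneg x
  have hlin : b ⬝ᵥ x ≤ (∑ i, |b i|) * ‖x‖ := by
    rw [dotProduct, Finset.sum_mul]
    refine Finset.sum_le_sum fun i _ => ?_
    calc b i * x i ≤ |b i| * |x i| := by rw [← abs_mul]; exact le_abs_self _
      _ ≤ |b i| * ‖x‖ := mul_le_mul_of_nonneg_left (norm_le_pi_norm x i) (abs_nonneg _)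
  have hsum : ‖x‖ ^ (p + 1) / (p + 1) ≤ ∑ i, |x i| ^ (p + 1) / (p + 1) := by
    rw [← Finset.sum_div]
    gcongr
    exact norm_rpow_le_sum_abs_rpow (by linarith) x
  unfold opowPotential
  linarith [div_nonneg hquad zero_le_two]

lemma tendsto_opowPotential_cocompact (hp : 0 < p) (hA : A.PosSemidef) (b : ι → ℝ) :
    Tendsto (opowPotential p A b) (cocompact _) atTop :=
  tendsto_atTop_mono (sub_mul_le_opowPotential hp hA b)
    ((tendsto_rpow_add_one_div_sub_mul_atTop hp _).comp tendsto_norm_cocompact_atTop)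

lemma opowPotential_add_smul_single [DecidableEq ι] (hA : A.IsSymm) (b x : ι → ℝ) (i : ι)
    (t : ℝ) :
    opowPotential p A b (x + t • Pi.single i 1) = opowPotential p A b x
      + (|x i + t| ^ (p + 1) / (p + 1) - |x i| ^ (p + 1) / (p + 1))
      + t * ((A *ᵥ x) i - b i) + t ^ 2 * A i i / 2 := by
  have hsum : ∑ k, |(x + t • Pi.single i 1 : ι → ℝ) k| ^ (p + 1) / (p + 1)
      - ∑ k, |x k| ^ (p + 1) / (p + 1)
      = |x i + t| ^ (p + 1) / (p + 1) - |x i| ^ (p + 1) / (p + 1) := by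
    rw [← Finset.sum_sub_distrib, Finset.sum_eq_single i (fun k _ hk => by simp [hk]) (by simp)]
    simp
  have hcross : x ⬝ᵥ A.col i = (A *ᵥ x) i := by
    rw [← mulVec_single_one, dotProduct_mulVec, ← vecMul_transpose, hA.eq, dotProduct_single,
      mul_one]
  unfold opowPotential
  simp only [mulVec_add, mulVec_smul, dotProduct_add, add_dotProduct, dotProduct_smul,
    smul_dotProduct, hcross, single_dotProduct, mulVec_single_one, col_apply, smul_eq_mul,
    dotProduct_single, one_mul, mul_one]
  linear_combination hsum

theorem exists_opow_add_mulVec_eq (hp : 0 < p) (hA : A.PosSemidef) (b : ι → ℝ) :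
    ∃ x : ι → ℝ, (fun i => opow (x i) p) + A *ᵥ x = b := by
  classical
  obtain ⟨x, hx⟩ := (continuous_opowPotential hp b).exists_forall_le
    (tendsto_opowPotential_cocompact hp hA b)
  refine ⟨x, funext fun i => ?_⟩
  have hsymm : A.IsSymm := isHermitian_iff_isSymm.mp hA.isHermitian
  have hmin : IsLocalMin (fun t : ℝ => opowPotential p A b (x + t • Pi.single i 1)) 0 :=
    Eventually.of_forall fun t => by simpa using hx _
  rw [funext (opowPotential_add_smul_single hsymm b x i)] at hmin
  have hΦ : HasDerivAt (fun t => |x i + t| ^ (p + 1) / (p + 1)) (opow (x i) p) 0 :=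
    HasDerivAt.comp_const_add (x i) 0 (by simpa using hasDerivAt_abs_rpow_div hp (x i))
  have hderiv := (((hasDerivAt_const (0 : ℝ) (opowPotential p A b x)).fun_add
    (hΦ.sub_const (|x i| ^ (p + 1) / (p + 1)))).fun_add
    ((hasDerivAt_id (0 : ℝ)).mul_const ((A *ᵥ x) i - b i))).fun_add
    (((hasDerivAt_pow 2 (0 : ℝ)).mul_const (A i i)).div_const 2)
  have := hmin.hasDerivAt_eq_zero (by simpa using hderiv)
  simp only [Pi.add_apply]
  linarith

theorem injective_opow_add_mulVec (hp : 0 < p) (hA : A.PosSemidef) :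
    Function.Injective fun x : ι → ℝ => (fun i => opow (x i) p) + A *ᵥ x := by
  intro x y hxy
  set d := x - y
  have hmono : ∀ i, 0 ≤ (opow (x i) p - opow (y i) p) * d i := fun i =>
    opow_sub_opow_mul_sub_nonneg hp (x i) (y i)
  have hquad : 0 ≤ d ⬝ᵥ (A *ᵥ d) := by simpa using hA.dotProduct_mulVec_nonneg d
  have hcomp : ∀ i, opow (x i) p - opow (y i) p = -(A *ᵥ d) i := fun i => by
    have := congrFun hxy i
    simp only [Pi.add_apply] at this
    simp only [d, mulVec_sub, Pi.sub_apply]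
    linarith
  have hzero : ∑ i, (opow (x i) p - opow (y i) p) * d i = -(d ⬝ᵥ (A *ᵥ d)) := by
    simp only [hcomp, neg_mul, Finset.sum_neg_distrib, dotProduct, mul_comm (d _)]
  have hsum : ∑ i, (opow (x i) p - opow (y i) p) * d i = 0 :=
    le_antisymm (by linarith) (Finset.sum_nonneg fun i _ => hmono i)
  funext i
  exact eq_of_opow_sub_opow_mul_sub_eq_zero hp
    ((Finset.sum_eq_zero_iff_of_nonneg fun i _ => hmono i).mp hsum i (Finset.mem_univ i))

theorem existsUnique_opow_add_mulVec_eq (hp : 0 < p) (hA : A.PosSemidef) (b : ι → ℝ) :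
    ∃! x : ι → ℝ, (fun i => opow (x i) p) + A *ᵥ x = b :=
  let ⟨x, hx⟩ := exists_opow_add_mulVec_eq hp hA b
  ⟨x, hx, fun _ hy => injective_opow_add_mulVec hp hA (hy.trans hx.symm)⟩

end MonotoneSystem

lemma Matrix.dotProduct_mulVec_le_of_sum_le {ι : Type*} [Fintype ι] {C : Matrix ι ι ℝ} {S : ℝ}
    (hC0 : ∀ i k, 0 ≤ C i k) (hC : C.IsSymm) (hrow : ∀ i, ∑ k, C i k ≤ S) (x : ι → ℝ) :
    x ⬝ᵥ (C *ᵥ x) ≤ S * (x ⬝ᵥ x) := by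
  have hamgm : 2 * ∑ i, ∑ k, x i * (C i k * x k) ≤
      ∑ i, ∑ k, C i k * x i ^ 2 + ∑ i, ∑ k, C i k * x k ^ 2 := by
    simp only [Finset.mul_sum, ← Finset.sum_add_distrib]
    gcongr with i _ k _
    nlinarith [mul_nonneg (hC0 i k) (sq_nonneg (x i - x k))]
  have hswap : ∑ i, ∑ k, C i k * x k ^ 2 = ∑ i, ∑ k, C i k * x i ^ 2 := by
    rw [Finset.sum_comm]
    simp only [hC.apply]
  have hrowsq : ∑ i, ∑ k, C i k * x i ^ 2 ≤ S * ∑ i, x i ^ 2 := by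
    rw [Finset.mul_sum]
    gcongr with i _
    rw [← Finset.sum_mul]
    exact mul_le_mul_of_nonneg_right (hrow i) (sq_nonneg _)
  have hquad : x ⬝ᵥ (C *ᵥ x) = ∑ i, ∑ k, x i * (C i k * x k) := by
    simp only [dotProduct, mulVec, Finset.mul_sum]
  have hnorm : x ⬝ᵥ x = ∑ i, x i ^ 2 := by
    simp only [dotProduct, sq]
  rw [hquad, hnorm]
  linarith

lemma Matrix.posSemidef_smul_one_sub {ι : Type*} [Fintype ι] [DecidableEq ι]
    {C : Matrix ι ι ℝ} {S : ℝ} (hC0 : ∀ i k, 0 ≤ C i k) (hC : C.IsSymm)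
    (hrow : ∀ i, ∑ k, C i k ≤ S) : (S • 1 - C).PosSemidef := by
  refine .of_dotProduct_mulVec_nonneg ?_ fun x => ?_
  · rw [isHermitian_iff_isSymm]
    simp [IsSymm, transpose_sub, transpose_smul, hC.eq]
  have := dotProduct_mulVec_le_of_sum_le hC0 hC hrow x
  simp only [star_trivial, sub_mulVec, smul_mulVec, one_mulVec, dotProduct_sub,
    dotProduct_smul, smul_eq_mul]
  linarith

section DiscreteLaplacian

variable {w : ℤ → ℝ}

lemma discLap_eq_tsum (w v : ℤ → ℝ) (i : ℤ) :
    discLap w v i = ∑' k, Function.update w 0 0 (i - k) * (v i - v k) := by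
  rw [discLap, ← (Equiv.subLeft i).tsum_eq]
  congr 1
  ext k
  simp only [Equiv.subLeft_apply, Function.update_apply, sub_sub_cancel, ite_mul, zero_mul]

-- `discLap` ignores `w 0`, hence `Function.update w 0 0` throughout.
noncomputable def lapMatrix (w : ℤ → ℝ) (s : Finset ℤ) : Matrix s s ℝ :=
  (∑' j, Function.update w 0 0 j) • (1 : Matrix s s ℝ) -
    Matrix.of fun i k : s => Function.update w 0 0 ((i : ℤ) - k)

lemma discLap_eq_lapMatrix_mulVec (hw : Summable w) {s : Finset ℤ} {v : ℤ → ℝ}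
    (hv : ∀ k ∉ s, v k = 0) (i : s) :
    discLap w v i = (lapMatrix w s *ᵥ fun k => v k) i := by
  have hw₀ : Summable fun k => Function.update w 0 0 ((i : ℤ) - k) :=
    (hw.update 0 0).comp_injective sub_right_injective
  have hsupp : ∀ k ∉ s, Function.update w 0 0 ((i : ℤ) - k) * v k = 0 := fun k hk => by
    rw [hv k hk, mul_zero]
  have hdiag : ∑' k, Function.update w 0 0 ((i : ℤ) - k) = ∑' j, Function.update w 0 0 j :=
    (Equiv.subLeft (i : ℤ)).tsum_eq _
  rw [discLap_eq_tsum]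
  simp only [mul_sub]
  rw [(hw₀.mul_right _).tsum_sub (summable_of_ne_finset_zero hsupp), tsum_mul_right,
    hdiag, tsum_eq_sum hsupp, ← Finset.sum_coe_sort s]
  simp only [lapMatrix, sub_mulVec, smul_mulVec, one_mulVec, Pi.sub_apply, Pi.smul_apply,
    smul_eq_mul]
  rfl

lemma posSemidef_lapMatrix (hw0 : ∀ j, 0 ≤ w j) (hwsym : ∀ j, w (-j) = w j) (hw : Summable w)
    (s : Finset ℤ) : (lapMatrix w s).PosSemidef := by
  have hw₀0 : ∀ j, 0 ≤ Function.update w 0 0 j := fun j => by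
    rw [Function.update_apply]
    split_ifs
    exacts [le_rfl, hw0 j]
  refine posSemidef_smul_one_sub (fun i k => hw₀0 _) ?_ fun i => ?_
  · ext i k
    simp only [transpose_apply, of_apply, Function.update_apply, sub_eq_zero]
    rw [← neg_sub (k : ℤ), hwsym]
    split_ifs <;> first | rfl | omega
  · calc ∑ k : s, Function.update w 0 0 ((i : ℤ) - k)
        = ∑ k ∈ s, Function.update w 0 0 ((i : ℤ) - k) :=
          Finset.sum_coe_sort s fun k => Function.update w 0 0 ((i : ℤ) - k)
      _ ≤ ∑' k, Function.update w 0 0 ((i : ℤ) - k) := Summable.sum_le_tsum s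
          (fun k _ => hw₀0 _) ((hw.update 0 0).comp_injective sub_right_injective)
      _ = ∑' j, Function.update w 0 0 j := (Equiv.subLeft (i : ℤ)).tsum_eq _

end DiscreteLaplacian

theorem existsUnique_opow_add_smul_discLap_eq {p Δt : ℝ} {w : ℤ → ℝ} (hp : 0 < p) (hΔt : 0 ≤ Δt)
    (hw0 : ∀ j, 0 ≤ w j) (hwsym : ∀ j, w (-j) = w j) (hw : Summable w) (s : Finset ℤ)
    (b : ℤ → ℝ) :
    ∃! v : ℤ → ℝ, (∀ k ∉ s, v k = 0) ∧ ∀ i ∈ s, opow (v i) p + Δt * discLap w v i = b i := by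
  obtain ⟨x, hx, hxu⟩ := existsUnique_opow_add_mulVec_eq hp
    ((posSemidef_lapMatrix hw0 hwsym hw s).smul hΔt) fun i : s => b i
  have hrestrict : ∀ v : ℤ → ℝ, (∀ k ∉ s, v k = 0) →
      ((∀ i ∈ s, opow (v i) p + Δt * discLap w v i = b i) ↔
        (fun i : s => opow (v i) p) + (Δt • lapMatrix w s) *ᵥ (fun i : s => v i) =
          fun i : s => b i) := fun v hv => by
    simp only [funext_iff, Pi.add_apply, Matrix.smul_mulVec, Pi.smul_apply, smul_eq_mul,
      ← discLap_eq_lapMatrix_mulVec hw hv, Subtype.forall]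
  have hext : ∀ k ∉ s, (fun k => if h : k ∈ s then x ⟨k, h⟩ else 0) k = 0 := fun k hk =>
    dif_neg hk
  refine ⟨fun k => if h : k ∈ s then x ⟨k, h⟩ else 0, ⟨hext, ?_⟩, ?_⟩
  · rw [hrestrict _ hext]
    simpa using hx
  · rintro v ⟨hv, hveq⟩
    have hvx := hxu _ ((hrestrict v hv).1 hveq)
    funext k
    by_cases hk : k ∈ s
    · simp [hk, ← hvx]
    · simp [hk, hv k hk]

theorem existsUnique_seq_of_existsUnique {α : Type*} {P : α → α → Prop} (h : ∀ x, ∃! y, P x y)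
    (a : α) : ∃! u : ℕ → α, u 0 = a ∧ ∀ n, P (u n) (u (n + 1)) := by
  choose f hf hfu using h
  refine ⟨fun n => f^[n] a, ⟨rfl, fun n => by simpa only [Function.iterate_succ_apply'] using hf _⟩,
    ?_⟩
  rintro u ⟨hu0, hu⟩
  funext n
  induction n with
  | zero => exact hu0
  | succ n ih => rw [Function.iterate_succ_apply', ← ih]; exact hfu _ _ (hu n)

def IsFDStep (q Δt : ℝ) (w : ℤ → ℝ) (Mx : ℤ) (v v' : ℤ → ℝ) : Prop :=
  (∀ i : ℤ, Mx < |i| → v' i = 0) ∧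
    ∀ i : ℤ, |i| ≤ Mx → (opow (v' i) (q - 1) - opow (v i) (q - 1)) / Δt + discLap w v' i = 0

lemma isFDStep_iff {q Δt : ℝ} (hΔt : Δt ≠ 0) (w : ℤ → ℝ) (Mx : ℤ) (v v' : ℤ → ℝ) :
    IsFDStep q Δt w Mx v v' ↔ (∀ k ∉ Finset.Icc (-Mx) Mx, v' k = 0) ∧
      ∀ i ∈ Finset.Icc (-Mx) Mx,
        opow (v' i) (q - 1) + Δt * discLap w v' i = opow (v i) (q - 1) := by
  have hmem : ∀ i, i ∈ Finset.Icc (-Mx) Mx ↔ |i| ≤ Mx := fun i => by simp [abs_le]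
  have hscheme : ∀ a b L : ℝ, (a - b) / Δt + L = 0 ↔ a + Δt * L = b := fun a b L => by
    rw [div_add' _ _ _ hΔt, div_eq_zero_iff, or_iff_left hΔt]
    constructor <;> intro h <;> linarith
  simp only [IsFDStep, hmem, not_le, hscheme]

lemma isFD_iff {q Δt : ℝ} {w : ℤ → ℝ} {Mx : ℤ} {u0 : ℤ → ℝ} (hu0 : ∀ i, Mx < |i| → u0 i = 0)
    (u : ℕ → ℤ → ℝ) :
    IsFD q Δt w Mx u0 u ↔ u 0 = u0 ∧ ∀ n, IsFDStep q Δt w Mx (u n) (u (n + 1)) := by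
  constructor
  · rintro ⟨h0, hsupp, hscheme⟩
    exact ⟨h0, fun n => ⟨hsupp (n + 1), hscheme n⟩⟩
  · rintro ⟨h0, hstep⟩
    refine ⟨h0, fun n => ?_, fun n => (hstep n).2⟩
    cases n with
    | zero => exact h0 ▸ hu0
    | succ n => exact (hstep n).1

theorem stmt8_general (q Δt : ℝ) (hq : 1 < q) (hΔt : 0 < Δt)
    (Mx : ℤ)
    (w : ℤ → ℝ) (hw0 : ∀ j : ℤ, 0 ≤ w j) (hwsym : ∀ j : ℤ, w (-j) = w j) (hwsum : Summable w)
    (u0 : ℤ → ℝ) (hu0 : ∀ i : ℤ, Mx < |i| → u0 i = 0) :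
    ∃! u : ℕ → ℤ → ℝ, IsFD q Δt w Mx u0 u := by
  have hstep : ∀ v, ∃! v', IsFDStep q Δt w Mx v v' := fun v =>
    (existsUnique_congr (isFDStep_iff hΔt.ne' w Mx v)).2 <|
      existsUnique_opow_add_smul_discLap_eq (by linarith) hΔt.le hw0 hwsym hwsum _ _
  exact (existsUnique_congr (isFD_iff hu0)).2 (existsUnique_seq_of_existsUnique hstep u0)

theorem stmt8 (q Δt h : ℝ) (hq : 1 < q) (hΔt : 0 < Δt) (hh : 0 < h)
    (Mx : ℤ) (hMx : 1 ≤ Mx)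
    (w : ℤ → ℝ) (hw0 : ∀ j : ℤ, 0 ≤ w j) (hwsym : ∀ j : ℤ, w (-j) = w j) (hwsum : Summable w)
    (u0 : ℤ → ℝ) (hu0 : ∀ i : ℤ, Mx < |i| → u0 i = 0) :
    ∃! u : ℕ → ℤ → ℝ, IsFD q Δt w Mx u0 u :=
  stmt8_general q Δt hq hΔt Mx w hw0 hwsym hwsum u0 hu0
end

section
/- Let q > 2, Δt > 0, a mesh size h > 0, an integer M_x ≥ 1, nonnegative symmetric summable weights (w_j)_{j≠0}, and suppose C > 0 satisfies the discrete Poincaré–Sobolev inequality for exponent q. Let u⁰ be initial data supported in {|i| ≤ M_x} and not identically zero, let (uⁿ)_{n∈ℕ} be the solution of the fully discrete implicit scheme (FD), and set T*ʰ := ((q−1)/(q−2)) C² ‖u⁰‖_{ℓ^q_h}^{q−2}. Then for every integer n ≥ 1, ‖uⁿ‖_{ℓ^q_h} ≤ ‖u⁰‖_{ℓ^q_h} (T*ʰ/(nΔt))^{n/2} (almost-extinction: faster than geometric decay past the time T*ʰ). -/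
/-!
Testing the scheme against `u^{n+1}` and applying Young's inequality to `u^{n+1} (uⁿ)^{q-1}`
gives the energy dissipation `‖u^{n+1}‖_X² ≤ (q-1)/(q Δt) (Aₙ - A_{n+1})`, where `Aₙ = ‖uⁿ‖_q^q`.
With the Poincaré–Sobolev inequality this becomes `A_{n+1} + κ A_{n+1}^{2/q} ≤ Aₙ`,
`κ = q Δt / ((q-1) C²)`. For such a sequence, concavity of `t ↦ t^{1-2/q}` bounds
`∑ₖ (A_{k+1}/Aₖ)^{2/q}` by `A₀^{1-2/q} / ((1-2/q) κ)`, and AM–GM turns this into a bound on the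
telescoping product `(Aₙ/A₀)^{2/q}`.
-/

open scoped BigOperators ENNReal

open Finset

lemma mul_opow_self {q : ℝ} (hq : q ≠ 0) (x : ℝ) : x * opow x (q - 1) = |x| ^ q := by
  rcases eq_or_ne x 0 with rfl | hx
  · simp [opow, Real.zero_rpow hq]
  have hx' : |x| ≠ 0 := abs_ne_zero.2 hx
  calc x * opow x (q - 1) = |x| ^ (q - 1 - 1) * |x| * |x| := by
        rw [mul_assoc, abs_mul_abs_self, opow]; ring
    _ = |x| ^ q := by
        rw [← Real.rpow_add_one hx', ← Real.rpow_add_one hx']; ring_nf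

lemma abs_opow {r : ℝ} (hr : r ≠ 0) (x : ℝ) : |opow x r| = |x| ^ r := by
  rcases eq_or_ne x 0 with rfl | hx
  · simp [opow, Real.zero_rpow hr]
  · rw [opow, abs_mul, abs_of_nonneg (by positivity), ← Real.rpow_add_one (abs_ne_zero.2 hx)]
    ring_nf

lemma mul_opow_le {q : ℝ} (hq : 1 < q) (x y : ℝ) :
    x * opow y (q - 1) ≤ |x| ^ q / q + (q - 1) / q * |y| ^ q := by
  have hconj : q.HolderConjugate (q / (q - 1)) := .conjExponent hq
  calc x * opow y (q - 1) ≤ |x| * |y| ^ (q - 1) := by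
        rw [← abs_opow (by linarith)]; exact (le_abs_self _).trans (abs_mul _ _).le
    _ ≤ |x| ^ q / q + (|y| ^ (q - 1)) ^ (q / (q - 1)) / (q / (q - 1)) :=
        Real.young_inequality_of_nonneg (abs_nonneg x) (by positivity) hconj
    _ = |x| ^ q / q + (q - 1) / q * |y| ^ q := by
        rw [← Real.rpow_mul (abs_nonneg y), mul_div_cancel₀ _ (by linarith), div_div_eq_mul_div]
        ring

lemma prod_le_sum_div_card_pow {ι : Type*} (s : Finset ι) {z : ι → ℝ} (hz : ∀ i ∈ s, 0 ≤ z i) :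
    ∏ i ∈ s, z i ≤ ((∑ i ∈ s, z i) / #s) ^ #s := by
  rcases s.eq_empty_or_nonempty with rfl | hs
  · simp
  have hcard : (0 : ℝ) < #s := by exact_mod_cast hs.card_pos
  have hamgm := Real.geom_mean_le_arith_mean s (fun _ => 1) z (fun _ _ => zero_le_one)
    (by simpa using hcard) hz
  simp only [Real.rpow_one, one_mul, sum_const, nsmul_eq_mul, mul_one] at hamgm
  calc ∏ i ∈ s, z i = ((∏ i ∈ s, z i) ^ ((#s : ℝ)⁻¹)) ^ #s :=
        (Real.rpow_inv_natCast_pow (prod_nonneg hz) hs.card_pos.ne').symm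
    _ ≤ ((∑ i ∈ s, z i) / #s) ^ #s :=
        pow_le_pow_left₀ (Real.rpow_nonneg (prod_nonneg hz) _) hamgm _

lemma mul_rpow_div_rpow_le_sub_rpow {θ κ x y : ℝ} (hθ0 : 0 < θ) (hθ1 : θ < 1)
    (hy : 0 ≤ y) (hx : 0 < x) (hyx : y + κ * y ^ θ ≤ x) :
    (1 - θ) * κ * (y ^ θ / x ^ θ) ≤ x ^ (1 - θ) - y ^ (1 - θ) := by
  have hxθ : 0 < x ^ θ := Real.rpow_pos_of_pos hx θ
  have hamgm : y ^ (1 - θ) * x ^ θ ≤ (1 - θ) * y + θ * x :=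
    Real.geom_mean_le_arith_mean2_weighted (by linarith) hθ0.le hy hx.le (by ring)
  have hsplit : x ^ (1 - θ) * x ^ θ = x := by
    rw [← Real.rpow_add hx, sub_add_cancel, Real.rpow_one]
  rw [← mul_div_assoc, div_le_iff₀ hxθ]
  calc (1 - θ) * κ * y ^ θ ≤ (1 - θ) * (x - y) := by
        rw [mul_assoc]; exact mul_le_mul_of_nonneg_left (by linarith) (by linarith)
    _ = x - ((1 - θ) * y + θ * x) := by ring
    _ ≤ (x ^ (1 - θ) - y ^ (1 - θ)) * x ^ θ := by
        rw [sub_mul (x ^ (1 - θ)), hsplit]; linarith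

theorem rpow_le_of_add_mul_rpow_le {θ κ : ℝ} (hθ0 : 0 < θ) (hθ1 : θ < 1) (hκ : 0 < κ)
    {a : ℕ → ℝ} (ha : ∀ k, 0 ≤ a k) (hstep : ∀ k, a (k + 1) + κ * a (k + 1) ^ θ ≤ a k) (n : ℕ) :
    a n ^ θ ≤ a 0 ^ θ * (a 0 ^ (1 - θ) / ((1 - θ) * κ * n)) ^ n := by
  set r : ℕ → ℝ := fun k => a (k + 1) ^ θ / a k ^ θ with hr_def
  have hr : ∀ k, 0 ≤ r k := fun k =>
    div_nonneg (Real.rpow_nonneg (ha _) θ) (Real.rpow_nonneg (ha _) θ)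
  have hvanish : ∀ k, a k = 0 → a (k + 1) = 0 := fun k hk =>
    le_antisymm (by nlinarith [hstep k, Real.rpow_nonneg (ha (k + 1)) θ]) (ha _)
  -- When `a k = 0`, also `a (k + 1) = 0` and `r k = 0 / 0 = 0`, so this holds unconditionally.
  have hpow_succ : ∀ k, a (k + 1) ^ θ = a k ^ θ * r k := by
    intro k
    rcases (ha k).eq_or_lt with hk | hk
    · simp [hvanish k hk.symm, ← hk, Real.zero_rpow hθ0.ne']
    · exact (mul_div_cancel₀ _ (Real.rpow_pos_of_pos hk θ).ne').symm
  have hprod : a n ^ θ = a 0 ^ θ * ∏ k ∈ range n, r k := by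
    induction n with
    | zero => simp
    | succ n ih => rw [prod_range_succ, ← mul_assoc, ← ih, hpow_succ]
  have hdrop : ∀ k, (1 - θ) * κ * r k ≤ a k ^ (1 - θ) - a (k + 1) ^ (1 - θ) := by
    intro k
    rcases (ha k).eq_or_lt with hk | hk
    · simp [hr_def, hvanish k hk.symm, ← hk, Real.zero_rpow hθ0.ne',
        Real.zero_rpow (sub_pos.2 hθ1).ne']
    · exact mul_rpow_div_rpow_le_sub_rpow hθ0 hθ1 (ha _) hk (hstep k)
  have hsum : ∑ k ∈ range n, r k ≤ a 0 ^ (1 - θ) / ((1 - θ) * κ) := by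
    rw [le_div_iff₀' (by nlinarith), mul_sum]
    calc ∑ k ∈ range n, (1 - θ) * κ * r k
        ≤ ∑ k ∈ range n, (a k ^ (1 - θ) - a (k + 1) ^ (1 - θ)) := sum_le_sum fun k _ => hdrop k
      _ = a 0 ^ (1 - θ) - a n ^ (1 - θ) := sum_range_sub' _ n
      _ ≤ a 0 ^ (1 - θ) := sub_le_self _ (Real.rpow_nonneg (ha n) _)
  rw [hprod]
  refine mul_le_mul_of_nonneg_left ?_ (Real.rpow_nonneg (ha 0) θ)
  calc ∏ k ∈ range n, r k ≤ ((∑ k ∈ range n, r k) / n) ^ n := by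
        simpa using prod_le_sum_div_card_pow (range n) fun k _ => hr k
    _ ≤ (a 0 ^ (1 - θ) / ((1 - θ) * κ * n)) ^ n := by
        rw [← div_div]
        gcongr
        exact div_nonneg (sum_nonneg fun k _ => hr k) n.cast_nonneg

section EnergyIdentity

variable {w v : ℤ → ℝ} {S : Finset ℤ}

theorem tsum_tsum_sq_sub_eq_two_mul_sum (hwsym : ∀ j, w (-j) = w j) (hwsum : Summable w)
    (hv : ∀ i ∉ S, v i = 0) :
    ∑' i : ℤ, ∑' j : ℤ, (if j = 0 then 0 else w j * (v i - v (i - j)) ^ 2)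
      = 2 * ∑ i ∈ S, v i * discLap w v i := by
  set M : ℝ := ∑ i ∈ S, |v i|
  have hvM : ∀ i, |v i| ≤ M := fun i => by
    by_cases hi : i ∈ S
    · exact single_le_sum (fun i _ => abs_nonneg (v i)) hi
    · rw [hv i hi, abs_zero]; exact sum_nonneg fun i _ => abs_nonneg (v i)
  have hdiff : ∀ i j, |v i - v j| ≤ 2 * M := fun i j => by
    linarith [abs_sub (v i) (v j), hvM i, hvM j]
  set D : ℤ → ℤ → ℝ := fun i j => if j = 0 then 0 else w j * (v i - v (i - j))
  have hD : ∀ i j, ‖D i j‖ ≤ 2 * M * ‖w j‖ := fun i j => by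
    by_cases hj : j = 0
    · simp only [D, hj, if_true, norm_zero]; positivity
    · simp only [D, hj, if_false, norm_mul, Real.norm_eq_abs]
      nlinarith [hdiff i (i - j), abs_nonneg (w j)]
  set P : ℤ × ℤ → ℝ := fun p => v p.1 * D p.1 p.2
  have hP : Summable P := by
    have hvfin : Summable fun i => ‖v i‖ :=
      summable_of_ne_finset_zero (s := S) fun i hi => by simp [hv i hi]
    refine .of_norm_bounded ((hvfin.mul_norm hwsum.norm).mul_left (2 * M)) fun p => ?_
    calc ‖P p‖ = ‖v p.1‖ * ‖D p.1 p.2‖ := norm_mul _ _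
      _ ≤ ‖v p.1‖ * (2 * M * ‖w p.2‖) := mul_le_mul_of_nonneg_left (hD _ _) (norm_nonneg _)
      _ = 2 * M * ‖v p.1 * w p.2‖ := by rw [norm_mul]; ring
  -- Discrete integration by parts: since `w (-j) = w j`, the reflection `(i, j) ↦ (i - j, -j)`
  -- turns `v i * (v i - v (i - j))` into `v (i - j) * (v (i - j) - v i)`.
  have hsymm : ∀ i j, (if j = 0 then 0 else w j * (v i - v (i - j)) ^ 2)
      = P (i, j) + P (i - j, -j) := by
    intro i j
    by_cases hj : j = 0
    · simp [P, D, hj]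
    · simp only [P, D, hj, neg_eq_zero, if_false, hwsym, sub_neg_eq_add, sub_add_cancel]
      ring
  let E : Equiv.Perm (ℤ × ℤ) :=
    Function.Involutive.toPerm (fun p => (p.1 - p.2, -p.2)) fun p => by simp
  have hE : ∀ p, E p = (p.1 - p.2, -p.2) := fun _ => rfl
  have hPE : Summable fun p => P (E p) := (E.summable_iff (f := P)).mpr hP
  have hF := hP.add hPE
  calc ∑' i : ℤ, ∑' j : ℤ, (if j = 0 then 0 else w j * (v i - v (i - j)) ^ 2)
      = ∑' p : ℤ × ℤ, (P p + P (E p)) := by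
        simp only [hsymm, hE]; exact (hF.tsum_prod' hF.prod_factor).symm
    _ = 2 * ∑' i, ∑' j, P (i, j) := by
        rw [hP.tsum_add hPE, E.tsum_eq P, hP.tsum_prod' hP.prod_factor]; ring
    _ = 2 * ∑ i ∈ S, v i * discLap w v i := by
        simp only [P, tsum_mul_left]
        rw [tsum_eq_sum fun i hi => by simp [hv i hi]]
        rfl

theorem energyNorm_sq {h : ℝ} (hh : 0 ≤ h) (hw0 : ∀ j, 0 ≤ w j) (hwsym : ∀ j, w (-j) = w j)
    (hwsum : Summable w) (hv : ∀ i ∉ S, v i = 0) :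
    energyNorm h w v ^ 2 = h * ∑ i ∈ S, v i * discLap w v i := by
  have hfactor : ∀ i j : ℤ, (if j = 0 then 0 else h * w j * (v i - v (i - j)) ^ 2)
      = h * (if j = 0 then 0 else w j * (v i - v (i - j)) ^ 2) := by
    intro i j; split_ifs <;> ring
  have hnonneg : 0 ≤ ∑' i : ℤ, ∑' j : ℤ, (if j = 0 then 0 else w j * (v i - v (i - j)) ^ 2) :=
    tsum_nonneg fun i => tsum_nonneg fun j => by
      split_ifs
      exacts [le_rfl, mul_nonneg (hw0 j) (sq_nonneg _)]
  simp only [energyNorm, hfactor, tsum_mul_left]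
  rw [Real.sq_sqrt (by positivity), tsum_tsum_sq_sub_eq_two_mul_sum hwsym hwsum hv]
  ring

end EnergyIdentity

lemma lqNorm_eq_rpow_sum {h q : ℝ} (hq : q ≠ 0) {S : Finset ℤ} {u : ℤ → ℝ}
    (hu : ∀ i ∉ S, u i = 0) : lqNorm h q u = (∑ i ∈ S, h * |u i| ^ q) ^ (1 / q) := by
  rw [lqNorm, tsum_eq_sum fun i hi => by simp [hu i hi, Real.zero_rpow hq]]

theorem energyNorm_sq_le_of_implicit_step {h q Δt : ℝ} {w p v : ℤ → ℝ} {S : Finset ℤ}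
    (hq : 1 < q) (hΔt : 0 < Δt) (hh : 0 ≤ h) (hw0 : ∀ j, 0 ≤ w j) (hwsym : ∀ j, w (-j) = w j)
    (hwsum : Summable w) (hv : ∀ i ∉ S, v i = 0)
    (hstep : ∀ i ∈ S, (opow (v i) (q - 1) - opow (p i) (q - 1)) / Δt + discLap w v i = 0) :
    energyNorm h w v ^ 2
      ≤ (q - 1) / (q * Δt) * (∑ i ∈ S, h * |p i| ^ q - ∑ i ∈ S, h * |v i| ^ q) := by
  have hlap : ∀ i ∈ S, v i * discLap w v i = (v i * opow (p i) (q - 1) - |v i| ^ q) / Δt := by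
    intro i hi
    rw [← mul_opow_self (by linarith) (v i), eq_neg_of_add_eq_zero_right (hstep i hi)]
    ring
  have hyoung : ∑ i ∈ S, h * (v i * opow (p i) (q - 1))
      ≤ (∑ i ∈ S, h * |v i| ^ q) / q + (q - 1) / q * ∑ i ∈ S, h * |p i| ^ q := by
    rw [sum_div, mul_sum, ← sum_add_distrib]
    refine sum_le_sum fun i _ => ?_
    calc h * (v i * opow (p i) (q - 1)) ≤ h * (|v i| ^ q / q + (q - 1) / q * |p i| ^ q) :=
          mul_le_mul_of_nonneg_left (mul_opow_le hq (v i) (p i)) hh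
      _ = _ := by ring
  calc energyNorm h w v ^ 2
      = (∑ i ∈ S, h * (v i * opow (p i) (q - 1)) - ∑ i ∈ S, h * |v i| ^ q) / Δt := by
        rw [energyNorm_sq hh hw0 hwsym hwsum hv, sum_congr rfl hlap, mul_sum,
          ← sum_sub_distrib, sum_div]
        exact sum_congr rfl fun i _ => by ring
    _ ≤ ((∑ i ∈ S, h * |v i| ^ q) / q + (q - 1) / q * ∑ i ∈ S, h * |p i| ^ q
          - ∑ i ∈ S, h * |v i| ^ q) / Δt := by gcongr
    _ = (q - 1) / (q * Δt) * (∑ i ∈ S, h * |p i| ^ q - ∑ i ∈ S, h * |v i| ^ q) := by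
        field_simp; ring

theorem add_mul_rpow_le_of_implicit_step {h q Δt C : ℝ} {w p v : ℤ → ℝ} {S : Finset ℤ}
    (hq : 1 < q) (hΔt : 0 < Δt) (hh : 0 ≤ h) (hC : 0 < C) (hw0 : ∀ j, 0 ≤ w j)
    (hwsym : ∀ j, w (-j) = w j) (hwsum : Summable w) (hv : ∀ i ∉ S, v i = 0)
    (hPS : lqNorm h q v ≤ C * energyNorm h w v)
    (hstep : ∀ i ∈ S, (opow (v i) (q - 1) - opow (p i) (q - 1)) / Δt + discLap w v i = 0) :
    ∑ i ∈ S, h * |v i| ^ q + q * Δt / ((q - 1) * C ^ 2) * (∑ i ∈ S, h * |v i| ^ q) ^ (2 / q)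
      ≤ ∑ i ∈ S, h * |p i| ^ q := by
  set Av := ∑ i ∈ S, h * |v i| ^ q
  set Ap := ∑ i ∈ S, h * |p i| ^ q
  have hAv : 0 ≤ Av := sum_nonneg fun i _ => by positivity
  have hpoincare : Av ^ (2 / q) ≤ C ^ 2 * ((q - 1) / (q * Δt) * (Ap - Av)) := by
    rw [lqNorm_eq_rpow_sum (by linarith) hv] at hPS
    calc Av ^ (2 / q) = (Av ^ (1 / q)) ^ 2 := by
          rw [← Real.rpow_natCast, ← Real.rpow_mul hAv]; ring_nf
      _ ≤ (C * energyNorm h w v) ^ 2 := pow_le_pow_left₀ (Real.rpow_nonneg hAv _) hPS 2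
      _ ≤ C ^ 2 * ((q - 1) / (q * Δt) * (Ap - Av)) := by
          rw [mul_pow]
          gcongr
          exact energyNorm_sq_le_of_implicit_step hq hΔt hh hw0 hwsym hwsum hv hstep
  have hq1 : 0 < q - 1 := by linarith
  calc Av + q * Δt / ((q - 1) * C ^ 2) * Av ^ (2 / q)
      ≤ Av + q * Δt / ((q - 1) * C ^ 2) * (C ^ 2 * ((q - 1) / (q * Δt) * (Ap - Av))) := by
        gcongr
    _ = Ap := by field_simp; ring

theorem rpow_inv_le_of_add_mul_rpow_le {q κ : ℝ} (hq : 2 < q) (hκ : 0 < κ) {a : ℕ → ℝ}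
    (ha : ∀ k, 0 ≤ a k) (hstep : ∀ k, a (k + 1) + κ * a (k + 1) ^ (2 / q) ≤ a k) (n : ℕ) :
    a n ^ (1 / q)
      ≤ a 0 ^ (1 / q) * (a 0 ^ ((q - 2) / q) / ((q - 2) / q * κ * n)) ^ ((n : ℝ) / 2) := by
  have hθ : 1 - 2 / q = (q - 2) / q := by field_simp
  have hsq := rpow_le_of_add_mul_rpow_le (by positivity) ((div_lt_one (by linarith)).2 hq) hκ ha
    hstep n
  rw [hθ] at hsq
  have hbase : 0 ≤ a 0 ^ ((q - 2) / q) / ((q - 2) / q * κ * n) :=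
    div_nonneg (Real.rpow_nonneg (ha 0) _)
      (mul_nonneg (mul_nonneg (div_nonneg (by linarith) (by linarith)) hκ.le) n.cast_nonneg)
  calc a n ^ (1 / q) = (a n ^ (2 / q)) ^ (1 / 2 : ℝ) := by
        rw [← Real.rpow_mul (ha n)]; ring_nf
    _ ≤ (a 0 ^ (2 / q) * (a 0 ^ ((q - 2) / q) / ((q - 2) / q * κ * n)) ^ n) ^ (1 / 2 : ℝ) :=
        Real.rpow_le_rpow (Real.rpow_nonneg (ha n) _) hsq (by norm_num)
    _ = a 0 ^ (1 / q) * (a 0 ^ ((q - 2) / q) / ((q - 2) / q * κ * n)) ^ ((n : ℝ) / 2) := by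
        rw [Real.mul_rpow (Real.rpow_nonneg (ha 0) _) (pow_nonneg hbase n),
          ← Real.rpow_mul (ha 0), ← Real.rpow_natCast, ← Real.rpow_mul hbase]
        ring_nf

theorem stmt12_general (q Δt h C : ℝ) (hq : 2 < q) (hΔt : 0 < Δt) (hh : 0 < h)
    (Mx : ℤ)
    (w : ℤ → ℝ) (hw0 : ∀ j : ℤ, 0 ≤ w j) (hwsym : ∀ j : ℤ, w (-j) = w j) (hwsum : Summable w)
    (hC : 0 < C) (hPS : PSConst h q C w Mx)
    (u0 : ℤ → ℝ)
    (u : ℕ → ℤ → ℝ) (hu : IsFD q Δt w Mx u0 u) :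
    ∀ n : ℕ, 1 ≤ n →
      lqNorm h q (u n) ≤
        lqNorm h q u0 *
          ((((q - 1) / (q - 2)) * C ^ 2 * lqNorm h q u0 ^ (q - 2)) / ((n : ℝ) * Δt))
            ^ ((n : ℝ) / 2) := by
  obtain ⟨rfl, hsupp, hscheme⟩ := hu
  intro n _
  have hS : ∀ k, ∀ i ∉ Icc (-Mx) Mx, u k i = 0 := fun k i hi =>
    hsupp k i (by rwa [mem_Icc, ← abs_le, not_le] at hi)
  set A : ℕ → ℝ := fun k => ∑ i ∈ Icc (-Mx) Mx, h * |u k i| ^ q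
  have hdecay : ∀ k, A (k + 1) + q * Δt / ((q - 1) * C ^ 2) * A (k + 1) ^ (2 / q) ≤ A k :=
    fun k => add_mul_rpow_le_of_implicit_step (by linarith) hΔt hh.le hC hw0 hwsym hwsum (hS _)
      (hPS _ (hsupp _)) fun i hi => hscheme k i (abs_le.2 (mem_Icc.1 hi))
  have hκ : 0 < q * Δt / ((q - 1) * C ^ 2) :=
    div_pos (mul_pos (by linarith) hΔt) (mul_pos (by linarith) (pow_pos hC 2))
  rw [lqNorm_eq_rpow_sum (by linarith) (hS n), lqNorm_eq_rpow_sum (by linarith) (hS 0)]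
  convert rpow_inv_le_of_add_mul_rpow_le (a := A) hq hκ
    (fun k => sum_nonneg fun i _ => by positivity) hdecay n using 3
  rw [← Real.rpow_mul (sum_nonneg fun i _ => by positivity), one_div_mul_eq_div]
  field_simp
  rfl

theorem stmt12 (q Δt h C : ℝ) (hq : 2 < q) (hΔt : 0 < Δt) (hh : 0 < h)
    (Mx : ℤ) (hMx : 1 ≤ Mx)
    (w : ℤ → ℝ) (hw0 : ∀ j : ℤ, 0 ≤ w j) (hwsym : ∀ j : ℤ, w (-j) = w j) (hwsum : Summable w)
    (hC : 0 < C) (hPS : PSConst h q C w Mx)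
    (u0 : ℤ → ℝ) (hu0 : ∀ i : ℤ, Mx < |i| → u0 i = 0) (hu0ne : ∃ i : ℤ, u0 i ≠ 0)
    (u : ℕ → ℤ → ℝ) (hu : IsFD q Δt w Mx u0 u) :
    ∀ n : ℕ, 1 ≤ n →
      lqNorm h q (u n) ≤
        lqNorm h q u0 *
          ((((q - 1) / (q - 2)) * C ^ 2 * lqNorm h q u0 ^ (q - 2)) / ((n : ℝ) * Δt))
            ^ ((n : ℝ) / 2) :=
  stmt12_general q Δt h C hq hΔt hh Mx w hw0 hwsym hwsum hC hPS u0 u hu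
end
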